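/- Let C be a q-ary GQC code of block lengths (m_1,...,m_l) with gcd(m_1⋯m_l, q) = 1 whose every constituent satisfies C_i = {0} or C_i = V_i. Then for every nonnegative integer j, C is μ_{−q^j}-LCD, i.e. C is μ_a-LCD for a ≡ −q^j (mod m). -/
import Mathlib


open scoped BigOperators

/-- The Euclidean dual of a linear code inside `∏ j, F[x]/(x^(m j) - 1)`, where each
quotient `F[x]/(x^(m j) - 1)` is identified with `F^(m j)` (coordinates indexed by
`ZMod (m j)`) via coefficient vectors. -/
def gqcDual {F : Type*} [Field F] {l : ℕ} {m : Fin l → ℕ} [∀ j, NeZero (m j)]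
    (C : Submodule F (∀ j, ZMod (m j) → F)) : Submodule F (∀ j, ZMod (m j) → F) where
  carrier := {b | ∀ c ∈ C, ∑ j, ∑ i, b j i * c j i = 0}
  zero_mem' := by intro c hc; simp
  add_mem' := by
    intro x y hx hy c hc
    simp only [Set.mem_setOf_eq, Pi.add_apply, add_mul, Finset.sum_add_distrib,
      hx c hc, hy c hc, add_zero]
  smul_mem' := by
    intro r x hx c hc
    simp only [Set.mem_setOf_eq, Pi.smul_apply, smul_eq_mul, mul_assoc,
      ← Finset.mul_sum, hx c hc, mul_zero]

/-- A generalized quasi-cyclic (GQC) code of block lengths `(m 0, …, m (l-1))`: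
an `F`-subspace of `∏ j, F[x]/(x^(m j) - 1)` (in coefficient-vector form) which is
closed under the simultaneous cyclic shift of all blocks, i.e. an `F[x]`-submodule. -/
def IsGQC {F : Type*} [Field F] {l : ℕ} {m : Fin l → ℕ}
    (C : Submodule F (∀ j, ZMod (m j) → F)) : Prop :=
  ∀ c ∈ C, (fun j i => c j (i - 1)) ∈ C

/-- The coordinate permutation `μ_a`, sending `(c_1(x), …, c_l(x))` to
`(c_1(x^a) mod (x^(m 0) - 1), …, c_l(x^a) mod (x^(m (l-1)) - 1))`; on coefficient
vectors the coefficient of `x^i` of the image of `c_j` is the coefficient of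
`x^(a⁻¹ i)` of `c_j` (inverse taken in `ZMod (m j)`). -/
def muMap {F : Type*} [Field F] {l : ℕ} (m : Fin l → ℕ) (a : ℤ) :
    (∀ j, ZMod (m j) → F) →ₗ[F] (∀ j, ZMod (m j) → F) where
  toFun c := fun j i => c j (((a : ZMod (m j)))⁻¹ * i)
  map_add' := fun _ _ => rfl
  map_smul' := fun _ _ => rfl

open Classical in
/-- The `i`-th constituent `C_i` of a GQC code `C`:
`C_i = {(δ_{1,i} c_1(ξ^i), …, δ_{l,i} c_l(ξ^i)) : c ∈ C}`, where `δ_{j,i} = 1` iff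
`ξ^(i * m j) = 1`, and `c_j(ξ^i) = ∑ t, c_j,t ξ^(i t)`. -/
noncomputable def constituent {F : Type*} [Field F] {l : ℕ} {m : Fin l → ℕ}
    [∀ j, NeZero (m j)] {K : Type*} [Field K] [Algebra F K] (ξ : K)
    (C : Submodule F (∀ j, ZMod (m j) → F)) (i : ℕ) : Set (Fin l → K) :=
  {v | ∃ c ∈ C, ∀ j, v j =
      if ξ ^ (i * m j) = 1 then ∑ t : ZMod (m j), algebraMap F K (c j t) * ξ ^ (i * t.val)
      else 0}

/-- The space `V_i = {(y_1, …, y_l) ∈ F_q(ξ^i)^l : y_j = 0 whenever ξ^(i m_j) ≠ 1}`. -/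
def Vset {l : ℕ} (m : Fin l → ℕ) (F : Type*) [Field F] {K : Type*} [Field K] [Algebra F K]
    (ξ : K) (i : ℕ) : Set (Fin l → K) :=
  {v | (∀ j, v j ∈ Algebra.adjoin F {ξ ^ i}) ∧ ∀ j, ξ ^ (i * m j) ≠ 1 → v j = 0}

/-- The Euclidean `V_i`-dual of a subset `S ⊆ V_i`:
`S^{⊥'} = {w ∈ V_i : ∑ j, v j * w j = 0 for all v ∈ S}`. -/
def cDual {l : ℕ} (m : Fin l → ℕ) (F : Type*) [Field F] {K : Type*} [Field K] [Algebra F K]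
    (ξ : K) (S : Set (Fin l → K)) (i : ℕ) : Set (Fin l → K) :=
  {w ∈ Vset m F ξ i | ∀ v ∈ S, ∑ j, v j * w j = 0}

section MyHelpers
variable {K : Type*} [Field K]

lemma myPowModEq {M : Type*} [Monoid M] {ζ : M} {n : ℕ} (h : ζ ^ n = 1) (k : ℕ) :
    ζ ^ k = ζ ^ (k % n) := by
  conv_lhs => rw [← Nat.div_add_mod k n]
  rw [pow_add, pow_mul, h, one_pow, one_mul]

lemma myPowValAdd {n : ℕ} [NeZero n] {ζ : K} (h : ζ ^ n = 1) (x y : ZMod n) :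
    ζ ^ (x + y).val = ζ ^ x.val * ζ ^ y.val := by
  rw [ZMod.val_add, ← myPowModEq h, pow_add]

lemma mySumPowZero {x : K} {N : ℕ} (h : x ^ N = 1) (hx : x ≠ 1) :
    ∑ k ∈ Finset.range N, x ^ k = 0 := by
  rw [geom_sum_eq hx, h, sub_self, zero_div]

lemma mySumZMod {n : ℕ} [NeZero n] (f : ZMod n → K) :
    ∑ v : ZMod n, f v = ∑ s ∈ Finset.range n, f s := by
  refine Finset.sum_nbij' (fun v : ZMod n => v.val) (fun s => (s : ZMod n)) ?_ ?_ ?_ ?_ ?_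
  · intro a _; exact Finset.mem_range.mpr (ZMod.val_lt a)
  · intro a _; exact Finset.mem_univ _
  · intro a _; simp [ZMod.natCast_val, ZMod.cast_id]
  · intro a ha; exact ZMod.val_cast_of_lt (Finset.mem_range.mp ha)
  · intro a _; simp [ZMod.natCast_val, ZMod.cast_id]

lemma myCancel {x a b : K} (hx : x ≠ 0) (ha : a * x = 1) (hb : b * x = 1) : a = b :=
  mul_right_cancel₀ hx (ha.trans hb.symm)

open Classical in
lemma mySplit {n m : ℕ} [NeZero n] (hnm : n ∣ m) (ζ : K) (hζ : ζ ^ m = 1)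
    (g : ZMod n → K) :
    ∑ s ∈ Finset.range m, ζ ^ s * g (s : ZMod n) =
      if ζ ^ n = 1 then ((m / n : ℕ) : K) * ∑ v : ZMod n, ζ ^ v.val * g v else 0 := by
  have hn : n ≠ 0 := NeZero.ne n
  obtain ⟨N, rfl⟩ := hnm
  have key : ∀ M : ℕ, ∑ s ∈ Finset.range (n * M), ζ ^ s * g (s : ZMod n)
      = (∑ k ∈ Finset.range M, (ζ ^ n) ^ k) * ∑ v ∈ Finset.range n, ζ ^ v * g (v : ZMod n) := by
    intro M
    induction M with
    | zero => simp
    | succ M ih =>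
      rw [Nat.mul_succ, Finset.sum_range_add, ih, Finset.sum_range_succ, add_mul]
      congr 1
      rw [Finset.mul_sum]
      refine Finset.sum_congr rfl fun v _ => ?_
      have hc : ((n * M + v : ℕ) : ZMod n) = (v : ZMod n) := by
        push_cast [ZMod.natCast_self]; ring
      rw [hc, pow_add, pow_mul]
      ring
  rw [key N]
  have hdiv : n * N / n = N := Nat.mul_div_cancel_left N (Nat.pos_of_ne_zero hn)
  by_cases h1 : ζ ^ n = 1
  · rw [if_pos h1, h1, hdiv]
    simp only [one_pow, Finset.sum_const, Finset.card_range, nsmul_eq_mul, mul_one]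
    congr 1
    rw [mySumZMod (fun v => ζ ^ v.val * g v)]
    refine Finset.sum_congr rfl fun s hs => ?_
    rw [ZMod.val_cast_of_lt (Finset.mem_range.mp hs)]
  · rw [if_neg h1, mySumPowZero (by rw [← pow_mul]; exact hζ) h1, zero_mul]

open Classical in
lemma myKeyRelation {F : Type*} [Field F] [Algebra F K]
    {l : ℕ} {mlen : Fin l → ℕ} [∀ j, NeZero (mlen j)]
    {m : ℕ} (hdvd : ∀ j, mlen j ∣ m)
    (ζ : K) (hζ : ζ ^ m = 1)
    (c d : ∀ j, ZMod (mlen j) → F) (b : ∀ j, ZMod (mlen j))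
    (h : ∀ s : ℕ, ∑ j, ∑ t, c j t * d j (b j * t - (s : ZMod (mlen j))) = 0) :
    ∑ j, (if ζ ^ mlen j = 1 then
      ((m / mlen j : ℕ) : K) *
      ((∑ t, algebraMap F K (c j t) * ζ ^ (b j * t).val) *
       (∑ w, algebraMap F K (d j w) * ζ ^ (-w : ZMod (mlen j)).val))
      else 0) = 0 := by
  have step : ∀ j : Fin l, (if ζ ^ mlen j = 1 then
      ((m / mlen j : ℕ) : K) *
      ((∑ t, algebraMap F K (c j t) * ζ ^ (b j * t).val) *
       (∑ w, algebraMap F K (d j w) * ζ ^ (-w : ZMod (mlen j)).val))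
      else 0)
      = ∑ s ∈ Finset.range m, ζ ^ s *
          ∑ t, algebraMap F K (c j t) * algebraMap F K (d j (b j * t - (s : ZMod (mlen j)))) := by
    intro j
    rw [mySplit (hdvd j) ζ hζ
      (fun v => ∑ t, algebraMap F K (c j t) * algebraMap F K (d j (b j * t - v)))]
    by_cases h1 : ζ ^ mlen j = 1
    · rw [if_pos h1, if_pos h1]
      congr 1
      calc (∑ t, algebraMap F K (c j t) * ζ ^ (b j * t).val) *
            (∑ w, algebraMap F K (d j w) * ζ ^ (-w : ZMod (mlen j)).val)
          = ∑ t, algebraMap F K (c j t) *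
              ∑ w, algebraMap F K (d j w) * (ζ ^ (b j * t).val * ζ ^ (-w : ZMod (mlen j)).val) := by
            rw [Finset.sum_mul]
            refine Finset.sum_congr rfl fun t _ => ?_
            rw [mul_assoc, Finset.mul_sum]
            congr 1
            refine Finset.sum_congr rfl fun w _ => ?_
            ring
        _ = ∑ t, algebraMap F K (c j t) *
              ∑ w, ζ ^ (b j * t - w).val * algebraMap F K (d j (b j * t - (b j * t - w))) := by
            refine Finset.sum_congr rfl fun t _ => ?_
            congr 1
            refine Finset.sum_congr rfl fun w _ => ?_
            rw [sub_sub_cancel, sub_eq_add_neg, myPowValAdd h1]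
            ring
        _ = ∑ t, algebraMap F K (c j t) *
              ∑ v, ζ ^ v.val * algebraMap F K (d j (b j * t - v)) := by
            refine Finset.sum_congr rfl fun t _ => ?_
            congr 1
            exact Equiv.sum_comp (Equiv.subLeft (b j * t))
              (fun v => ζ ^ v.val * algebraMap F K (d j (b j * t - v)))
        _ = ∑ t, ∑ v, ζ ^ v.val * (algebraMap F K (c j t) * algebraMap F K (d j (b j * t - v))) := by
            refine Finset.sum_congr rfl fun t _ => ?_
            rw [Finset.mul_sum]
            refine Finset.sum_congr rfl fun v _ => ?_
            ring
        _ = ∑ v, ∑ t, ζ ^ v.val * (algebraMap F K (c j t) * algebraMap F K (d j (b j * t - v))) :=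
            Finset.sum_comm
        _ = ∑ v, ζ ^ v.val * ∑ t, algebraMap F K (c j t) * algebraMap F K (d j (b j * t - v)) := by
            refine Finset.sum_congr rfl fun v _ => ?_
            rw [Finset.mul_sum]
    · rw [if_neg h1, if_neg h1]
  calc ∑ j, (if ζ ^ mlen j = 1 then _ else 0)
      = ∑ j, ∑ s ∈ Finset.range m, ζ ^ s *
          ∑ t, algebraMap F K (c j t) * algebraMap F K (d j (b j * t - (s : ZMod (mlen j)))) :=
        Finset.sum_congr rfl fun j _ => step j
    _ = ∑ s ∈ Finset.range m, ζ ^ s *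
          algebraMap F K (∑ j, ∑ t, c j t * d j (b j * t - (s : ZMod (mlen j)))) := by
        rw [Finset.sum_comm]
        refine Finset.sum_congr rfl fun s _ => ?_
        simp_rw [map_sum, map_mul, Finset.mul_sum]
    _ = 0 := by
        refine Finset.sum_eq_zero fun s _ => ?_
        rw [h s, map_zero, mul_zero]

lemma myInversion {n : ℕ} [NeZero n] {ζ : K}
    (hζ : IsPrimitiveRoot ζ n) (hn : (n : K) ≠ 0) (f : ZMod n → K)
    (h : ∀ k < n, ∑ t : ZMod n, f t * ζ ^ (k * t.val) = 0) (t₀ : ZMod n) : f t₀ = 0 := by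
  classical
  have hζ1 : ζ ^ n = 1 := hζ.pow_eq_one
  have H : ∑ k ∈ Finset.range n, ζ ^ (k * (-t₀).val) * ∑ t : ZMod n, f t * ζ ^ (k * t.val) = 0 :=
    Finset.sum_eq_zero fun k hk => by rw [h k (Finset.mem_range.mp hk), mul_zero]
  have H2 : ∑ t : ZMod n, f t * ∑ k ∈ Finset.range n, (ζ ^ ((-t₀).val + t.val)) ^ k = 0 := by
    calc ∑ t : ZMod n, f t * ∑ k ∈ Finset.range n, (ζ ^ ((-t₀).val + t.val)) ^ k
        = ∑ t : ZMod n, ∑ k ∈ Finset.range n, f t * (ζ ^ ((-t₀).val + t.val)) ^ k := by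
          refine Finset.sum_congr rfl fun t _ => ?_
          rw [Finset.mul_sum]
      _ = ∑ k ∈ Finset.range n, ∑ t : ZMod n, f t * (ζ ^ ((-t₀).val + t.val)) ^ k :=
          Finset.sum_comm
      _ = ∑ k ∈ Finset.range n, ζ ^ (k * (-t₀).val) * ∑ t : ZMod n, f t * ζ ^ (k * t.val) := by
          refine Finset.sum_congr rfl fun k _ => ?_
          rw [Finset.mul_sum]
          refine Finset.sum_congr rfl fun t _ => ?_
          rw [← pow_mul, mul_comm ((-t₀).val + t.val) k, Nat.mul_add, pow_add]
          ring
      _ = 0 := H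
  have inner : ∀ t : ZMod n, (∑ k ∈ Finset.range n, (ζ ^ ((-t₀).val + t.val)) ^ k)
      = if t = t₀ then (n : K) else 0 := by
    intro t
    have hxn : (ζ ^ ((-t₀).val + t.val)) ^ n = 1 := by
      rw [← pow_mul, mul_comm, pow_mul, hζ1, one_pow]
    by_cases ht : t = t₀
    · subst ht
      have : ζ ^ ((-t).val + t.val) = 1 := by
        rw [hζ.pow_eq_one_iff_dvd]
        have : (((-t).val + t.val : ℕ) : ZMod n) = 0 := by
          push_cast [ZMod.natCast_val, ZMod.cast_id]
          ring
        exact (ZMod.natCast_eq_zero_iff _ _).mp this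
      simp [this]
    · rw [if_neg ht]
      refine mySumPowZero hxn ?_
      intro hx1
      apply ht
      have hdvd := (hζ.pow_eq_one_iff_dvd _).mp hx1
      have : (((-t₀).val + t.val : ℕ) : ZMod n) = 0 :=
        (ZMod.natCast_eq_zero_iff _ _).mpr hdvd
      push_cast [ZMod.natCast_val, ZMod.cast_id] at this
      linear_combination this
  rw [Finset.sum_congr rfl (fun t _ => by rw [inner t])] at H2
  simp only [Finset.sum_ite_eq' Finset.univ t₀ (fun t => f t * (n : K)), Finset.mem_univ,
    if_true, mul_ite, mul_zero] at H2
  exact (mul_eq_zero.mp H2).resolve_right hn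

end MyHelpers

/-- Let `C` be a `q`-ary GQC code of block lengths `(m_1, …, m_l)` with
`gcd(m_1 ⋯ m_l, q) = 1` all of whose constituents satisfy `C_i = {0}` or `C_i = V_i`.
Then for every nonnegative integer `j`, `C` is `μ_{-q^j}`-LCD. -/
theorem gqc_zero_or_full_mu_neg_q_pow_lcd
    {F : Type*} [Field F] [Fintype F] {l : ℕ} (mlen : Fin l → ℕ) [∀ j, NeZero (mlen j)]
    (hcop : Nat.Coprime (∏ j, mlen j) (Fintype.card F))
    (m : ℕ) [NeZero m] (hm : m = Finset.univ.lcm mlen)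
    {K : Type*} [Field K] [Algebra F K] [IsAlgClosed K] [Algebra.IsAlgebraic F K]
    (ξ : K) (hξ : IsPrimitiveRoot ξ m)
    (C : Submodule F (∀ j, ZMod (mlen j) → F)) (hC : IsGQC C)
    (hfull : ∀ i < m, constituent ξ C i = {0} ∨ constituent ξ C i = Vset mlen F ξ i) :
    ∀ j : ℕ, C ⊓ gqcDual (C.map (muMap mlen (-((Fintype.card F : ℤ) ^ j)))) = ⊥ := by
  classical
  intro jj
  rw [eq_bot_iff]
  intro c hc
  obtain ⟨hcC, hcD⟩ := Submodule.mem_inf.mp hc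
  set q := Fintype.card F with hqdef
  set a : ℤ := -((q : ℤ) ^ jj) with hadef
  -- characteristic facts
  set p := ringChar F with hpdef
  haveI : CharP F p := ringChar.charP F
  obtain ⟨n, hp, hq⟩ := FiniteField.card F p
  rw [← hqdef] at hq
  haveI : Fact p.Prime := ⟨hp⟩
  haveI : CharP K p := charP_of_injective_algebraMap (algebraMap F K).injective p
  have hm0 : 0 < m := Nat.pos_of_ne_zero (NeZero.ne m)
  have hdvd : ∀ j', mlen j' ∣ m := fun j' => hm ▸ Finset.dvd_lcm (Finset.mem_univ j')
  have hmprod : m ∣ ∏ j', mlen j' :=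
    hm ▸ Finset.lcm_dvd fun b _ => Finset.dvd_prod_of_mem mlen (Finset.mem_univ b)
  have hqm : Nat.Coprime m q := Nat.Coprime.coprime_dvd_left hmprod hcop
  have hpq : p ∣ q := by
    rw [hq]; exact dvd_pow_self p (by exact_mod_cast n.ne_zero)
  have hpm : ¬ p ∣ m := by
    intro hdm
    have : p ∣ Nat.gcd m q := Nat.dvd_gcd hdm hpq
    rw [hqm] at this
    exact hp.one_lt.ne' (Nat.dvd_one.mp this)
  have hξm : ξ ^ m = 1 := hξ.pow_eq_one
  have hξ0 : ξ ≠ 0 := hξ.ne_zero (NeZero.ne m)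
  have hq0 : q ≠ 0 := Fintype.card_ne_zero
  -- the main claim: all constituent coordinates of c vanish
  have hzero : ∀ i, i < m → ∀ j₀ : Fin l, ξ ^ (i * mlen j₀) = 1 →
      ∑ t : ZMod (mlen j₀), algebraMap F K (c j₀ t) * ξ ^ (i * t.val) = 0 := by
    intro i hi j₀ hij₀
    set i₂ := q ^ jj * i % m with hi₂def
    have hi₂ : i₂ < m := Nat.mod_lt _ hm0
    have hmod : ∀ k : ℕ, ξ ^ (i₂ * k) = ξ ^ (q ^ jj * i * k) := by
      intro k
      rw [myPowModEq hξm (i₂ * k), myPowModEq hξm (q ^ jj * i * k),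
        Nat.mul_mod (q ^ jj * i) k m, Nat.mul_mod i₂ k m, hi₂def,
        Nat.mod_mod_of_dvd _ dvd_rfl]
    have hδ₂ : ξ ^ (i₂ * mlen j₀) = 1 := by
      rw [hmod, show q ^ jj * i * mlen j₀ = i * mlen j₀ * q ^ jj by ring, pow_mul, hij₀,
        one_pow]
    rcases hfull i₂ hi₂ with h0 | hV
    -- Case 1 : the i₂-th constituent is zero; use Frobenius
    · have hS2 : (∑ t : ZMod (mlen j₀), algebraMap F K (c j₀ t) * ξ ^ (i * t.val)) ^ q ^ jj
          = ∑ t : ZMod (mlen j₀), algebraMap F K (c j₀ t) * ξ ^ (i₂ * t.val) := by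
        have hqp : q ^ jj = p ^ ((n : ℕ) * jj) := by rw [hq, ← pow_mul]
        rw [hqp, sum_pow_char_pow]
        refine Finset.sum_congr rfl fun t _ => ?_
        rw [mul_pow, ← hqp, ← map_pow, FiniteField.pow_card_pow, ← pow_mul, hmod]
        congr 2
        ring
      have hv : (fun j' => if ξ ^ (i₂ * mlen j') = 1 then
          (∑ t : ZMod (mlen j'), algebraMap F K (c j' t) * ξ ^ (i₂ * t.val)) else 0)
          ∈ constituent ξ C i₂ := ⟨c, hcC, fun j' => rfl⟩
      rw [h0, Set.mem_singleton_iff] at hv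
      have h2 := congrFun hv j₀
      rw [if_pos hδ₂] at h2
      have : (∑ t : ZMod (mlen j₀), algebraMap F K (c j₀ t) * ξ ^ (i * t.val)) ^ q ^ jj = 0 := by
        rw [hS2, h2]; rfl
      exact pow_eq_zero_iff (pow_ne_zero jj hq0) |>.mp this
    -- Case 2 : the i₂-th constituent is full; use duality
    · set r := m - i₂ with hrdef
      have hri : r + i₂ = m := Nat.sub_add_cancel hi₂.le
      set ζ := ξ ^ r with hζdef
      have hζm : ζ ^ m = 1 := by rw [hζdef, ← pow_mul, mul_comm, pow_mul, hξm, one_pow]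
      have hdelta : ∀ j' : Fin l, ζ ^ mlen j' * ξ ^ (i₂ * mlen j') = 1 := by
        intro j'
        rw [hζdef, ← pow_mul, ← pow_add, show r * mlen j' + i₂ * mlen j' = m * mlen j' by
          rw [← add_mul, hri], pow_mul, hξm, one_pow]
      have hd1 : ∀ j', ζ ^ mlen j' = 1 ↔ ξ ^ (i₂ * mlen j') = 1 := by
        intro j'
        constructor
        · intro h1; have := hdelta j'; rwa [h1, one_mul] at this
        · intro h1; have := hdelta j'; rwa [h1, mul_one] at this
      have hδ₂' : ζ ^ mlen j₀ = 1 := (hd1 j₀).mpr hδ₂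
      -- the indicator vector of j₀ lies in the constituent
      have hvV : (fun j' => if j' = j₀ then (1 : K) else 0) ∈ Vset mlen F ξ i₂ := by
        constructor
        · intro j'
          show (if j' = j₀ then (1 : K) else 0) ∈ Algebra.adjoin F {ξ ^ i₂}
          by_cases h' : j' = j₀
          · rw [if_pos h']; exact one_mem _
          · rw [if_neg h']; exact zero_mem _
        · intro j' hne
          by_cases h' : j' = j₀
          · exact absurd hδ₂ (h' ▸ hne)
          · simp [h']
      rw [← hV] at hvV
      obtain ⟨d, hdC, hdv⟩ := hvV
      -- inverse facts
      set b : ∀ j', ZMod (mlen j') := fun j' => ((a : ZMod (mlen j')))⁻¹ with hbdef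
      have haunit : ∀ j', IsUnit ((a : ZMod (mlen j'))) := by
        intro j'
        have hcopq : Nat.Coprime (q ^ jj) (mlen j') :=
          Nat.Coprime.pow_left jj
            (Nat.Coprime.coprime_dvd_left
              (Finset.dvd_prod_of_mem mlen (Finset.mem_univ j')) hcop).symm
        have hcast : ((a : ZMod (mlen j'))) = -(((q ^ jj : ℕ) : ZMod (mlen j'))) := by
          rw [hadef]; push_cast; ring
        rw [hcast]
        exact ((ZMod.isUnit_iff_coprime _ _).mpr hcopq).neg
      have hab : ∀ j', (a : ZMod (mlen j')) * b j' = 1 :=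
        fun j' => ZMod.mul_inv_of_unit _ (haunit j')
      -- shifted codewords
      have hshift : ∀ s : ℕ,
          (fun j' (u : ZMod (mlen j')) => d j' (u - (s : ZMod (mlen j')))) ∈ C := by
        intro s
        induction s with
        | zero => simp only [Nat.cast_zero, sub_zero]; exact hdC
        | succ s ih =>
          have h2 := hC _ ih
          have h3 : ∀ (j' : Fin l) (u : ZMod (mlen j')),
              u - 1 - (s : ZMod (mlen j')) = u - ((s + 1 : ℕ) : ZMod (mlen j')) := by
            intro j' u; push_cast; ring
          simp only [h3] at h2
          exact h2
      -- orthogonality hypothesis for the key relation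
      have hkey_h : ∀ s : ℕ,
          ∑ j', ∑ t, c j' t * d j' (b j' * t - (s : ZMod (mlen j'))) = 0 := by
        intro s
        have hmem : (muMap mlen a (fun j' u => d j' (u - (s : ZMod (mlen j')))))
            ∈ C.map (muMap mlen a) :=
          Submodule.mem_map_of_mem (hshift s)
        have h4 : ∀ e ∈ C.map (muMap mlen a), ∑ j', ∑ i', c j' i' * e j' i' = 0 := hcD
        have h5 := h4 _ hmem
        simpa only [muMap, LinearMap.coe_mk, AddHom.coe_mk] using h5
      have hrel := myKeyRelation hdvd ζ hζm c d b hkey_h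
      -- identify the B factors
      have hB : ∀ j', ζ ^ mlen j' = 1 →
          (∑ w, algebraMap F K (d j' w) * ζ ^ (-w : ZMod (mlen j')).val)
            = ∑ w : ZMod (mlen j'), algebraMap F K (d j' w) * ξ ^ (i₂ * w.val) := by
        intro j' h1
        refine Finset.sum_congr rfl fun w _ => ?_
        congr 1
        have e1 : ζ ^ (-w : ZMod (mlen j')).val * ζ ^ w.val = 1 := by
          rw [← myPowValAdd h1, neg_add_cancel, ZMod.val_zero, pow_zero]
        have e2 : ξ ^ (i₂ * w.val) * ζ ^ w.val = 1 := by
          rw [hζdef, ← pow_mul, ← pow_add, show i₂ * w.val + r * w.val = m * w.val by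
            rw [← add_mul, add_comm i₂ r, hri], pow_mul, hξm, one_pow]
        exact myCancel (pow_ne_zero _ (by rw [hζdef] at *; exact pow_ne_zero _ hξ0)) e1 e2
      -- collapse the sum to the j₀ term
      rw [Finset.sum_eq_single j₀] at hrel
      rotate_left
      · intro j' _ hne
        by_cases h1 : ζ ^ mlen j' = 1
        · rw [if_pos h1, hB j' h1]
          have hv' : (0 : K)
              = ∑ t : ZMod (mlen j'), algebraMap F K (d j' t) * ξ ^ (i₂ * t.val) := by
            simpa [hne, (hd1 j').mp h1] using hdv j'
          rw [← hv', mul_zero, mul_zero]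
        · rw [if_neg h1]
      · intro h'
        exact absurd (Finset.mem_univ j₀) h'
      rw [if_pos hδ₂', hB j₀ hδ₂'] at hrel
      have hv0 : (1 : K)
          = ∑ t : ZMod (mlen j₀), algebraMap F K (d j₀ t) * ξ ^ (i₂ * t.val) := by
        simpa [hδ₂] using hdv j₀
      rw [← hv0, mul_one] at hrel
      -- identify the A factor
      have hA : ∀ t : ZMod (mlen j₀), ζ ^ (b j₀ * t).val = ξ ^ (i * t.val) := by
        intro t
        set u := (b j₀ * t).val with hudef
        have hdvd1 : mlen j₀ ∣ q ^ jj * u + t.val := by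
          rw [← ZMod.natCast_eq_zero_iff]
          push_cast
          rw [hudef, ZMod.natCast_val, ZMod.cast_id, ZMod.natCast_val, ZMod.cast_id]
          have hQ : ((q : ZMod (mlen j₀)) ^ jj) = -(a : ZMod (mlen j₀)) := by
            rw [hadef]; push_cast; ring
          rw [hQ]
          have := hab j₀
          calc -(a : ZMod (mlen j₀)) * (b j₀ * t) + t
              = -((a : ZMod (mlen j₀)) * b j₀) * t + t := by ring
            _ = 0 := by rw [this]; ring
        have hdvd2 : m ∣ i * mlen j₀ := (hξ.pow_eq_one_iff_dvd _).mp hij₀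
        have hdvd3 : m ∣ i₂ * u + i * t.val := by
          obtain ⟨k, hk⟩ := hdvd1
          have h6 : m ∣ q ^ jj * i * u + i * t.val := by
            have h7 : q ^ jj * i * u + i * t.val = i * mlen j₀ * k := by
              rw [show i * mlen j₀ * k = i * (mlen j₀ * k) by ring, ← hk]; ring
            rw [h7]
            exact hdvd2.mul_right k
          have h8 : (i₂ * u + i * t.val) % m = (q ^ jj * i * u + i * t.val) % m :=
            Nat.ModEq.add_right (i * t.val) ((Nat.mod_modEq (q ^ jj * i) m).mul_right u)
          rw [Nat.dvd_iff_mod_eq_zero, h8, ← Nat.dvd_iff_mod_eq_zero]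
          exact h6
        have e1 : ζ ^ u * ξ ^ (i₂ * u) = 1 := by
          rw [hζdef, ← pow_mul, ← pow_add, show r * u + i₂ * u = m * u by
            rw [← add_mul, hri], pow_mul, hξm, one_pow]
        have e2 : ξ ^ (i * t.val) * ξ ^ (i₂ * u) = 1 := by
          have hd : m ∣ i * t.val + i₂ * u := by rwa [Nat.add_comm] at hdvd3
          rw [← pow_add, myPowModEq hξm, Nat.mod_eq_zero_of_dvd hd, pow_zero]
        exact myCancel (pow_ne_zero _ hξ0) e1 e2
      rw [Finset.sum_congr rfl (fun t _ => by rw [hA t])] at hrel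
      -- cancel the nonzero scalar
      have hne : ((m / mlen j₀ : ℕ) : K) ≠ 0 := by
        rw [Ne, CharP.cast_eq_zero_iff K p]
        intro hdq
        exact hpm (hdq.trans (Nat.div_dvd_of_dvd (hdvd j₀)))
      exact (mul_eq_zero.mp hrel).resolve_left hne
  -- conclude c = 0 by Fourier inversion on each block
  have hc0 : ∀ (j₀ : Fin l) (t : ZMod (mlen j₀)), c j₀ t = 0 := by
    intro j₀
    have hprim : IsPrimitiveRoot (ξ ^ (m / mlen j₀)) (mlen j₀) :=
      hξ.pow hm0 (Nat.div_mul_cancel (hdvd j₀)).symm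
    have hnK : ((mlen j₀ : ℕ) : K) ≠ 0 := by
      rw [Ne, CharP.cast_eq_zero_iff K p]
      exact fun hdq => hpm (hdq.trans (hdvd j₀))
    intro t
    have hinv := myInversion hprim hnK (fun t => algebraMap F K (c j₀ t)) ?_ t
    · exact (algebraMap F K).injective (by rw [hinv, map_zero])
    · intro k hk
      have hdivpos : 0 < m / mlen j₀ :=
        Nat.div_pos (Nat.le_of_dvd hm0 (hdvd j₀)) (Nat.pos_of_ne_zero (NeZero.ne _))
      have hi : m / mlen j₀ * k < m := by
        calc m / mlen j₀ * k < m / mlen j₀ * mlen j₀ :=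
              mul_lt_mul_of_pos_left hk hdivpos
          _ = m := Nat.div_mul_cancel (hdvd j₀)
      have hδ : ξ ^ (m / mlen j₀ * k * mlen j₀) = 1 := by
        rw [show m / mlen j₀ * k * mlen j₀ = m / mlen j₀ * mlen j₀ * k by ring,
          Nat.div_mul_cancel (hdvd j₀), pow_mul, hξm, one_pow]
      have := hzero (m / mlen j₀ * k) hi j₀ hδ
      simpa only [← pow_mul, mul_assoc] using this
  simp only [Submodule.mem_bot]
  funext j₀ t
  exact hc0 j₀ t
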